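/- arXiv:1210.6831 — 2 statements merged into one kernel-verified Lean document; each statement's English description precedes it below -/
import Mathlib

section
/- Let G be a simple graph with an independent set I satisfying |I| < |V(G)|. Then every maximal null coloring of G has at least |I| + 1 color classes. -/
open SimpleGraph

/-- The number of steps of the walk `W` from a vertex labeled `i` to a vertex labeled `j`
(with respect to the labeling `f`). -/
def colorSteps {V C : Type} [DecidableEq C] {G : SimpleGraph V} (f : V → C)
    {x y : V} (W : G.Walk x y) (i j : C) : ℕ :=
  W.darts.countP fun d => decide (f d.toProd.1 = i ∧ f d.toProd.2 = j)

/-- A coloring `f` of `G` is a null coloring if for every closed walk `W` and every ordered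
pair `(i, j)` of distinct colors, the number of steps of `W` from a vertex colored `i` to a
vertex colored `j` equals the number of steps from a vertex colored `j` to one colored `i`. -/
def IsNullColoring {V C : Type} [DecidableEq C] (G : SimpleGraph V) (f : V → C) : Prop :=
  ∀ (x : V) (W : G.Walk x x) (i j : C), i ≠ j → colorSteps f W i j = colorSteps f W j i

/-- A null coloring is maximal if no null coloring of `G` has more color classes
(the number of color classes of a coloring `g` is `(Set.range g).ncard`). -/
def IsMaximalNullColoring {V C : Type} [DecidableEq C] (G : SimpleGraph V) (f : V → C) : Prop :=
  IsNullColoring G f ∧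
    ∀ (D : Type) [DecidableEq D] (g : V → D), IsNullColoring G g →
      (Set.range g).ncard ≤ (Set.range f).ncard

/-- The quotient graph `G/f`: vertices are the color classes of `f` (identified with the
range of `f`), two distinct classes being adjacent iff some edge of `G` joins them. -/
def quotientGraph {V C : Type} (G : SimpleGraph V) (f : V → C) :
    SimpleGraph (Set.range f) where
  Adj a b := a ≠ b ∧ ∃ x y : V, G.Adj x y ∧ f x = a.1 ∧ f y = b.1
  symm := ⟨by
    rintro a b ⟨hab, x, y, hxy, hx, hy⟩
    exact ⟨hab.symm, y, x, hxy.symm, hy, hx⟩⟩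
  loopless := ⟨by rintro a ⟨h, -⟩; exact h rfl⟩

/-- The graph obtained from `G` by identifying the vertices `u` and `v` (the merged vertex
is represented by `u`; any loops created are discarded). -/
def identify {V : Type} (G : SimpleGraph V) (u v : V) : SimpleGraph {x : V // x ≠ v} where
  Adj a b := a ≠ b ∧ (G.Adj a.1 b.1 ∨ (a.1 = u ∧ G.Adj v b.1) ∨ (b.1 = u ∧ G.Adj a.1 v))
  symm := ⟨by
    rintro a b ⟨hab, h⟩
    refine ⟨hab.symm, ?_⟩
    rcases h with h | ⟨ha, hb⟩ | ⟨hb, ha⟩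
    · exact Or.inl h.symm
    · exact Or.inr (Or.inr ⟨ha, hb.symm⟩)
    · exact Or.inr (Or.inl ⟨hb, ha.symm⟩)⟩
  loopless := ⟨by rintro a ⟨h, -⟩; exact h rfl⟩

/-- The quotient map `h : G → G'` corresponding to the identification of `u` and `v`. -/
def identifyMap {V : Type} [DecidableEq V] (u v : V) (huv : u ≠ v) : V → {x : V // x ≠ v} :=
  fun x => if hx : x = v then ⟨u, huv⟩ else ⟨x, hx⟩

/-- The net number of steps of `W` from label `a` to label `b`:  steps from `a` to `b`
minus steps from `b` to `a`. -/
def netCount {V C : Type} [DecidableEq C] {G : SimpleGraph V} (f : V → C)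
    {x y : V} (W : G.Walk x y) (a b : C) : ℤ :=
  (colorSteps f W a b : ℤ) - (colorSteps f W b a : ℤ)

/-!
Colour each vertex of `I` with its own colour and all other vertices with one extra colour `∗`.
As `I` is independent, no step of a walk joins two colours of `I`, and every step leaving or
entering `x ∈ I` comes from or goes to `∗`. So on a closed walk the steps from `x` to `∗` and
from `∗` to `x` are the departures from and the arrivals at `x`, which agree. This null
colouring has `|I| + 1` classes because `I ≠ V`.
-/

theorem SimpleGraph.Walk.countP_darts_fst_eq_countP_darts_snd {V : Type} {G : SimpleGraph V}
    {u : V} (W : G.Walk u u) (p : V → Bool) :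
    W.darts.countP (fun d => p d.fst) = W.darts.countP (fun d => p d.snd) :=
  calc W.darts.countP (fun d => p d.fst)
      = W.support.dropLast.countP p := by rw [← W.map_fst_darts, List.countP_map]; rfl
    _ = W.support.tail.countP p := (W.tail_support_perm_dropLast_support.countP_eq p).symm
    _ = W.darts.countP (fun d => p d.snd) := by rw [← W.map_snd_darts, List.countP_map]; rfl

section NullColoring

variable {V C : Type} [DecidableEq C] {G : SimpleGraph V} {f : V → C} {c : C}

theorem colorSteps_eq_zero_of_isIndepSet (hind : G.IsIndepSet {x | f x ≠ c}) {x y : V}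
    (W : G.Walk x y) {i j : C} (hi : i ≠ c) (hj : j ≠ c) : colorSteps f W i j = 0 := by
  refine List.countP_eq_zero.mpr fun d _ => ?_
  simp only [decide_eq_true_eq, not_and]
  rintro rfl rfl
  exact hind hi hj d.adj.ne d.adj

theorem colorSteps_eq_countP_fst_of_isIndepSet (hind : G.IsIndepSet {x | f x ≠ c}) {x y : V}
    (W : G.Walk x y) {i : C} (hi : i ≠ c) :
    colorSteps f W i c = W.darts.countP (fun d => f d.fst = i) := by
  refine List.countP_congr fun d _ => ?_
  simp only [decide_eq_true_eq, and_iff_left_iff_imp]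
  rintro rfl
  by_contra hsnd
  exact hind hi hsnd d.adj.ne d.adj

theorem colorSteps_eq_countP_snd_of_isIndepSet (hind : G.IsIndepSet {x | f x ≠ c}) {x y : V}
    (W : G.Walk x y) {i : C} (hi : i ≠ c) :
    colorSteps f W c i = W.darts.countP (fun d => f d.snd = i) := by
  refine List.countP_congr fun d _ => ?_
  simp only [decide_eq_true_eq, and_iff_right_iff_imp]
  rintro rfl
  by_contra hfst
  exact hind hfst hi d.adj.ne d.adj

theorem isNullColoring_of_isIndepSet (c : C) (hind : G.IsIndepSet {x | f x ≠ c}) :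
    IsNullColoring G f := by
  have steps_to_c : ∀ (x : V) (W : G.Walk x x) (i : C), i ≠ c →
      colorSteps f W i c = colorSteps f W c i := fun x W i hi => by
    rw [colorSteps_eq_countP_fst_of_isIndepSet hind W hi,
      colorSteps_eq_countP_snd_of_isIndepSet hind W hi]
    exact W.countP_darts_fst_eq_countP_darts_snd (fun v => f v = i)
  intro x W i j hij
  by_cases hi : i = c
  · subst hi
    exact (steps_to_c x W j (Ne.symm hij)).symm
  by_cases hj : j = c
  · subst hj
    exact steps_to_c x W i hij
  rw [colorSteps_eq_zero_of_isIndepSet hind W hi hj, colorSteps_eq_zero_of_isIndepSet hind W hj hi]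

end NullColoring

section SingletonsColoring

variable {V : Type} (I : Set V)

open Classical in
noncomputable def singletonsColoring (x : V) : Option I :=
  if h : x ∈ I then some ⟨x, h⟩ else none

theorem singletonsColoring_ne_none_iff {x : V} : singletonsColoring I x ≠ none ↔ x ∈ I := by
  unfold singletonsColoring
  split_ifs with h <;> simp [h]

theorem singletonsColoring_surjective (hI : I ≠ Set.univ) :
    Function.Surjective (singletonsColoring I) := by
  rintro (_ | a)
  · obtain ⟨x, hx⟩ := (Set.ne_univ_iff_exists_notMem I).mp hI
    exact ⟨x, not_not.mp (mt (singletonsColoring_ne_none_iff I).mp hx)⟩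
  · exact ⟨a, by simp [singletonsColoring]⟩

theorem ncard_range_singletonsColoring [Finite V] (hI : I ≠ Set.univ) :
    (Set.range (singletonsColoring I)).ncard = I.ncard + 1 := by
  rw [(singletonsColoring_surjective I hI).range_eq, Set.ncard_univ, Finite.card_option,
    Nat.card_coe_set_eq]

end SingletonsColoring

/-- If `G` has an independent set `I` with `|I| < |V(G)|`, then every maximal
null coloring of `G` has at least `|I| + 1` color classes. -/
theorem maximal_null_coloring_card_ge
    {V C : Type} [Fintype V] [DecidableEq C]
    (G : SimpleGraph V) (I : Set V)
    (hind : ∀ x ∈ I, ∀ y ∈ I, ¬ G.Adj x y)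
    (hcard : I.ncard < Fintype.card V)
    (f : V → C) (hf : IsMaximalNullColoring G f) :
    I.ncard + 1 ≤ (Set.range f).ncard := by
  classical
  have hI : I ≠ Set.univ := by
    rintro rfl
    rw [Set.ncard_univ, Nat.card_eq_fintype_card] at hcard
    exact hcard.false
  have hnull : IsNullColoring G (singletonsColoring I) := by
    refine isNullColoring_of_isIndepSet none fun x hx y hy _ => ?_
    exact hind x ((singletonsColoring_ne_none_iff I).mp hx) y
      ((singletonsColoring_ne_none_iff I).mp hy)
  calc I.ncard + 1 = (Set.range (singletonsColoring I)).ncard :=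
        (ncard_range_singletonsColoring I hI).symm
    _ ≤ (Set.range f).ncard := hf.2 _ _ hnull
end

section
/- Let G be a connected simple graph, f a coloring of G, and w a vertex of G such that no cycle of G passes through w and no other vertex of G has the color f(w). Suppose that the sets of colors used by f on distinct connected components of G - w are pairwise disjoint and that, for each connected component H of G - w, the quotient graph H/(f restricted to H) is acyclic. Then the quotient graph G/f is a tree. -/
open SimpleGraph

/-!
A cycle of `G/f` either avoids the class of `w` or passes through it. A walk of `G/f` avoiding
the class of `w` never leaves the colors of one component `H` of `G - w`: an edge between two
such classes comes from an edge of `G - w`, and distinct components use disjoint colors. So a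
cycle avoiding it would be a cycle of `H/f`. A cycle through the class of `w` leaves it towards
two distinct classes joined by a walk avoiding it; these are the colors of two neighbours of `w`
(the only vertex of its color), which therefore lie in one component of `G - w`, and a path
between them closes a cycle of `G` through `w`.
-/

namespace SimpleGraph

variable {V : Type*} {G : SimpleGraph V}

theorem exists_isCycle_iff_exists_walk_notMem_support {v : V} :
    (∃ c : G.Walk v v, c.IsCycle) ↔
      ∃ a b, a ≠ b ∧ G.Adj v a ∧ G.Adj v b ∧ ∃ p : G.Walk a b, v ∉ p.support := by
  constructor
  · rintro ⟨c, hc⟩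
    cases c with
    | nil => exact (Walk.not_isCycle_nil hc).elim
    | @cons _ a _ hva p =>
      have hp : ¬ p.Nil := Walk.not_nil_of_isCycle_cons hc
      have hpath : (p.dropLast.concat (Walk.adj_penultimate hp)).IsPath := by
        rw [Walk.concat_dropLast]; exact ((Walk.cons_isCycle_iff p hva).1 hc).1
      refine ⟨a, p.penultimate, ?_, hva, (Walk.adj_penultimate hp).symm, p.dropLast,
        ((Walk.concat_isPath_iff _).1 hpath).2⟩
      simpa [Walk.penultimate_cons_of_not_nil _ _ hp] using hc.snd_ne_penultimate
  · rintro ⟨a, b, hab, hva, hvb, p, hvp⟩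
    classical
    let q : G.Walk a b := p.toPath
    have hvq : v ∉ q.support := fun h => hvp (p.support_toPath_subset_support h)
    refine ⟨.cons hva (q.concat hvb.symm), (Walk.cons_isCycle_iff _ _).2
      ⟨p.toPath.2.concat hvq _, ?_⟩⟩
    rw [Walk.edges_concat, List.concat_eq_append, List.mem_append, List.mem_singleton, Sym2.eq_iff]
    rintro (he | ⟨rfl, -⟩ | ⟨-, rfl⟩)
    · exact hvq (q.fst_mem_support_of_mem_edges he)
    · exact hvq q.end_mem_support
    · exact hab rfl

theorem Walk.IsCycle.not_support_subset_of_isAcyclic_induce {s : Set V} {v : V}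
    {c : G.Walk v v} (hc : c.IsCycle) (hs : (G.induce s).IsAcyclic) :
    ¬ ∀ x ∈ c.support, x ∈ s := fun hcs =>
  hs (c.induce s hcs) <| by
    rw [← Walk.isCycle_map_iff_of_injective (f := (Embedding.induce s).toHom)
      Subtype.val_injective, Walk.map_induce]
    exact hc

def ColorsDisjointOnComponents {W C : Type*} (H : SimpleGraph W) (g : W → C) : Prop :=
  ∀ c₁ c₂ : H.ConnectedComponent, c₁ ≠ c₂ → ∀ x ∈ c₁.supp, ∀ y ∈ c₂.supp, g x ≠ g y

theorem ColorsDisjointOnComponents.mem_supp_of_apply_mem_range {W C : Type*}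
    {H : SimpleGraph W} {g : W → C} (hdisj : H.ColorsDisjointOnComponents g)
    {c : H.ConnectedComponent} {x : W} (hx : g x ∈ Set.range fun y : c.supp => g y.1) :
    x ∈ c.supp := by
  obtain ⟨⟨y, hy⟩, hyx⟩ := hx
  by_contra hxc
  exact hdisj _ c (fun h => hxc h) x rfl y hy hyx.symm

end SimpleGraph

open Set

section Quotient

variable {V C : Type} {G : SimpleGraph V} {f : V → C} {w : V}

theorem quotientGraph_reachable_of_adj {x y : V} (h : G.Adj x y) :
    (quotientGraph G f).Reachable (rangeFactorization f x) (rangeFactorization f y) := by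
  by_cases hxy : f x = f y
  · rw [show rangeFactorization f x = rangeFactorization f y from Subtype.ext hxy]
  · exact Adj.reachable ⟨fun h => hxy (congrArg Subtype.val h), x, y, h, rfl, rfl⟩

theorem quotientGraph_reachable {x y : V} (h : G.Reachable x y) :
    (quotientGraph G f).Reachable (rangeFactorization f x) (rangeFactorization f y) := by
  rw [reachable_eq_reflTransGen] at h ⊢
  exact Relation.ReflTransGen.lift' _ (fun _ _ hadj => by
    simpa only [reachable_eq_reflTransGen] using quotientGraph_reachable_of_adj hadj) _ _ h

theorem quotientGraph_connected (hG : G.Connected) : (quotientGraph G f).Connected := by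
  have : Nonempty (range f) := hG.nonempty.map (rangeFactorization f)
  refine ⟨fun a b => ?_⟩
  obtain ⟨x, rfl⟩ := rangeFactorization_surjective a
  obtain ⟨y, rfl⟩ := rangeFactorization_surjective b
  exact quotientGraph_reachable (hG x y)

def componentClasses (f : V → C) (c : (G.induce {x | x ≠ w}).ConnectedComponent) :
    Set (range f) :=
  {a | a.1 ∈ range fun y : c.supp => f y.1.1}

theorem mem_componentClasses_of_adj
    (hdisj : ColorsDisjointOnComponents (G.induce {x | x ≠ w}) fun x => f x.1)
    {c : (G.induce {x | x ≠ w}).ConnectedComponent} {a b : range f}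
    (hab : (quotientGraph G f).Adj a b) (ha : a ∈ componentClasses f c)
    (haw : a ≠ rangeFactorization f w) (hbw : b ≠ rangeFactorization f w) :
    b ∈ componentClasses f c := by
  obtain ⟨-, x, y, hxy, hx, hy⟩ := hab
  have hxw : x ≠ w := by rintro rfl; exact haw (Subtype.ext hx.symm)
  have hyw : y ≠ w := by rintro rfl; exact hbw (Subtype.ext hy.symm)
  have hxc : (⟨x, hxw⟩ : {x | x ≠ w}) ∈ c.supp := hdisj.mem_supp_of_apply_mem_range (hx ▸ ha)
  have hyc : (⟨y, hyw⟩ : {x | x ≠ w}) ∈ c.supp := by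
    rw [ConnectedComponent.mem_supp_iff] at hxc ⊢
    rw [← hxc]
    exact ConnectedComponent.sound (G := G.induce {x | x ≠ w}) (Adj.reachable hxy.symm)
  exact ⟨⟨⟨y, hyw⟩, hyc⟩, hy⟩

theorem support_subset_componentClasses
    (hdisj : ColorsDisjointOnComponents (G.induce {x | x ≠ w}) fun x => f x.1)
    {c : (G.induce {x | x ≠ w}).ConnectedComponent} {a b : range f}
    (p : (quotientGraph G f).Walk a b) (hp : rangeFactorization f w ∉ p.support)
    (ha : a ∈ componentClasses f c) :
    ∀ x ∈ p.support, x ∈ componentClasses f c := by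
  induction p with
  | nil => simpa using ha
  | cons h p ih =>
    rw [Walk.support_cons, List.mem_cons, not_or] at hp
    rw [Walk.support_cons, List.forall_mem_cons]
    exact ⟨ha, ih hp.2 (mem_componentClasses_of_adj hdisj h ha (Ne.symm hp.1)
      (fun h => hp.2 (h ▸ p.start_mem_support)))⟩

theorem isAcyclic_induce_componentClasses (huniq : ∀ x : V, x ≠ w → f x ≠ f w)
    (hdisj : ColorsDisjointOnComponents (G.induce {x | x ≠ w}) fun x => f x.1)
    (c : (G.induce {x | x ≠ w}).ConnectedComponent)
    (hc : (quotientGraph ((G.induce {x | x ≠ w}).induce c.supp) fun y => f y.1.1).IsAcyclic) :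
    ((quotientGraph G f).induce (componentClasses f c)).IsAcyclic := by
  have mem_supp {a : componentClasses f c} {x : V} (hx : f x = a.1.1) :
      ∃ hxw : x ≠ w, (⟨x, hxw⟩ : {x | x ≠ w}) ∈ c.supp := by
    have hxw : x ≠ w := by
      rintro rfl
      obtain ⟨y, hy⟩ := a.2
      exact huniq _ y.1.2 (hy.trans hx.symm)
    exact ⟨hxw, hdisj.mem_supp_of_apply_mem_range (show f x ∈ _ from hx ▸ a.2)⟩
  refine hc.comap ⟨fun a => ⟨a.1.1, a.2⟩, fun {a b} ⟨hab, x, y, hxy, hx, hy⟩ => ?_⟩ ?_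
  · obtain ⟨hxw, hxc⟩ := mem_supp hx
    obtain ⟨hyw, hyc⟩ := mem_supp hy
    exact ⟨fun h => hab (Subtype.ext (Subtype.mk.inj h)), ⟨⟨x, hxw⟩, hxc⟩, ⟨⟨y, hyw⟩, hyc⟩,
      hxy, hx, hy⟩
  · intro a b h
    exact Subtype.ext (Subtype.ext (Subtype.mk.inj h))

theorem exists_adj_of_quotientGraph_adj (huniq : ∀ x : V, x ≠ w → f x ≠ f w) {a : range f}
    (h : (quotientGraph G f).Adj (rangeFactorization f w) a) : ∃ y, G.Adj w y ∧ f y = a.1 := by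
  obtain ⟨-, x, y, hxy, hx, hy⟩ := h
  obtain rfl : x = w := by_contra fun hxw => huniq x hxw hx
  exact ⟨y, hxy, hy⟩

theorem exists_isCycle_of_isCycle_quotientGraph (huniq : ∀ x : V, x ≠ w → f x ≠ f w)
    (hdisj : ColorsDisjointOnComponents (G.induce {x | x ≠ w}) fun x => f x.1)
    (h : ∃ c : (quotientGraph G f).Walk (rangeFactorization f w) (rangeFactorization f w),
      c.IsCycle) :
    ∃ c : G.Walk w w, c.IsCycle := by
  rw [exists_isCycle_iff_exists_walk_notMem_support] at h ⊢
  obtain ⟨a, b, hab, hwa, hwb, p, hwp⟩ := h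
  obtain ⟨y₁, hwy₁, hy₁⟩ := exists_adj_of_quotientGraph_adj huniq hwa
  obtain ⟨y₂, hwy₂, hy₂⟩ := exists_adj_of_quotientGraph_adj huniq hwb
  have hy₁w : y₁ ≠ w := by rintro rfl; exact hwa.ne (Subtype.ext hy₁)
  have hy₂w : y₂ ≠ w := by rintro rfl; exact hwb.ne (Subtype.ext hy₂)
  let c := (G.induce {x | x ≠ w}).connectedComponentMk ⟨y₁, hy₁w⟩
  have hb : b ∈ componentClasses f c :=
    support_subset_componentClasses hdisj p hwp ⟨⟨⟨y₁, hy₁w⟩, rfl⟩, hy₁⟩ b p.end_mem_support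
  have hy₂c : (⟨y₂, hy₂w⟩ : {x | x ≠ w}) ∈ c.supp :=
    hdisj.mem_supp_of_apply_mem_range (show f y₂ ∈ _ from hy₂ ▸ hb)
  obtain ⟨q⟩ := (ConnectedComponent.exact hy₂c).symm
  refine ⟨y₁, y₂, ?_, hwy₁, hwy₂, q.map (Embedding.induce _).toHom, ?_⟩
  · rintro rfl
    exact hab (Subtype.ext (hy₁.symm.trans hy₂))
  · -- `rw [Walk.support_map]` fails: the endpoints of `q.map _` are `y₁`, `y₂` only up to
    -- defeq
    intro h
    obtain ⟨z, -, hz⟩ :=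
      List.mem_map.1 ((Walk.support_map _ q).subst (motive := (w ∈ ·)) h)
    exact z.2 hz

theorem not_isCycle_quotientGraph_of_notMem_support (huniq : ∀ x : V, x ≠ w → f x ≠ f w)
    (hdisj : ColorsDisjointOnComponents (G.induce {x | x ≠ w}) fun x => f x.1)
    (hacyc : ∀ c : (G.induce {x : V | x ≠ w}).ConnectedComponent,
        (quotientGraph ((G.induce {x : V | x ≠ w}).induce c.supp)
          (fun y => f y.1.1)).IsAcyclic)
    {a : range f} {c : (quotientGraph G f).Walk a a} (hc : c.IsCycle)
    (hw : rangeFactorization f w ∉ c.support) : False := by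
  obtain ⟨x, rfl⟩ := rangeFactorization_surjective a
  have hxw : x ≠ w := by rintro rfl; exact hw c.start_mem_support
  let k := (G.induce {x | x ≠ w}).connectedComponentMk ⟨x, hxw⟩
  exact hc.not_support_subset_of_isAcyclic_induce
    (isAcyclic_induce_componentClasses huniq hdisj k (hacyc k))
    (support_subset_componentClasses hdisj c hw ⟨⟨⟨x, hxw⟩, rfl⟩, rfl⟩)

end Quotient

theorem quotient_is_tree_of_components_general
    {V C : Type}
    (G : SimpleGraph V) (hG : G.Connected) (f : V → C) (w : V)
    (hcyc : ∀ (x : V) (W : G.Walk x x), W.IsCycle → w ∉ W.support)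
    (huniq : ∀ x : V, x ≠ w → f x ≠ f w)
    (hdisj : ∀ c₁ c₂ : (G.induce {x : V | x ≠ w}).ConnectedComponent, c₁ ≠ c₂ →
        ∀ x ∈ c₁.supp, ∀ y ∈ c₂.supp, f x.1 ≠ f y.1)
    (hacyc : ∀ c : (G.induce {x : V | x ≠ w}).ConnectedComponent,
        (quotientGraph ((G.induce {x : V | x ≠ w}).induce c.supp)
          (fun y => f y.1.1)).IsAcyclic) :
    (quotientGraph G f).IsTree := by
  classical
  refine ⟨quotientGraph_connected hG, fun a c hc => ?_⟩
  by_cases hw : rangeFactorization f w ∈ c.support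
  · obtain ⟨W, hW⟩ :=
      exists_isCycle_of_isCycle_quotientGraph huniq hdisj ⟨c.rotate _ hw, hc.rotate hw⟩
    exact hcyc w W hW W.start_mem_support
  · exact not_isCycle_quotientGraph_of_notMem_support huniq hdisj hacyc hc hw

/-- Let `G` be connected, `f` a coloring, and `w` a vertex lying on no cycle
of `G` whose color is used by no other vertex.  If the sets of colors used by `f` on
distinct connected components of `G - w` are pairwise disjoint, and for each component the
quotient graph of the restriction of `f` is acyclic, then the quotient graph `G/f` is a
tree. -/
theorem quotient_is_tree_of_components
    {V C : Type} [Fintype V] [DecidableEq V] [DecidableEq C]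
    (G : SimpleGraph V) (hG : G.Connected) (f : V → C) (w : V)
    (hcyc : ∀ (x : V) (W : G.Walk x x), W.IsCycle → w ∉ W.support)
    (huniq : ∀ x : V, x ≠ w → f x ≠ f w)
    (hdisj : ∀ c₁ c₂ : (G.induce {x : V | x ≠ w}).ConnectedComponent, c₁ ≠ c₂ →
        ∀ x ∈ c₁.supp, ∀ y ∈ c₂.supp, f x.1 ≠ f y.1)
    (hacyc : ∀ c : (G.induce {x : V | x ≠ w}).ConnectedComponent,
        (quotientGraph ((G.induce {x : V | x ≠ w}).induce c.supp)
          (fun y => f y.1.1)).IsAcyclic) :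
    (quotientGraph G f).IsTree :=
  quotient_is_tree_of_components_general G hG f w hcyc huniq hdisj hacyc
end
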